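/- arXiv:math/0012126 — 3 statements merged into one kernel-verified Lean document; each statement's English description precedes it below -/
import Mathlib

section
/- Let a, b, c be positive integers and let x₀ be an integer with 1 ≤ x₀ ≤ a+b−1. Then Σ_{y=0}^{a+c-1} P_{a,b,c}(x₀, y) equals x₀ if 1 ≤ x₀ ≤ min(a,b); equals min(a,b) if min(a,b) ≤ x₀ ≤ max(a,b); and equals a+b−x₀ if max(a,b) ≤ x₀ ≤ a+b−1. -/
/-!
Every cell `(i, j)` of a plane partition `T` in an `a × b × c` box contributes exactly one
horizontal lozenge, in column `x = j - i + a` and at a height `T(i,j) + a - i - 1` that always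
lies in `[0, a + c - 1]`. Summing the probabilities over the whole column therefore counts, for
every `T`, the cells on the diagonal `j - i = x - a` of the `a × b` rectangle, independently of
`T`. That diagonal has `min(x, a, b, a + b - x)` cells when this is nonnegative, none otherwise.
-/

open Finset

/-- Plane partitions in an `a × b × c` box: assignments of entries in `{0, …, c}` to the
cells of an `a × b` rectangle with weakly decreasing rows and columns. -/
def PlanePartitions (a b c : ℕ) : Finset (Fin a → Fin b → Fin (c + 1)) :=
  univ.filter (fun T =>
    (∀ i : Fin a, ∀ j j' : Fin b, j ≤ j' → T i j' ≤ T i j) ∧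
    (∀ i i' : Fin a, ∀ j : Fin b, i ≤ i' → T i' j ≤ T i j))

/-- `P a b c x y` is the probability that a uniformly random lozenge tiling of the hexagon
with side lengths `a, b, c, a, b, c` contains the horizontal lozenge with lowest vertex
`(x, y)`: the cell `(i, j)` (1-based) of a plane partition `T` contributes the horizontal
lozenge with lowest vertex `(j - i + a, T(i,j) + a - i)`. -/
def P (a b c : ℕ) (x y : ℤ) : ℚ :=
  (∑ T ∈ PlanePartitions a b c,
      ((univ.filter (fun p : Fin a × Fin b =>
          ((p.2 : ℕ) : ℤ) - ((p.1 : ℕ) : ℤ) + (a : ℤ) = x ∧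
          ((T p.1 p.2 : ℕ) : ℤ) + (a : ℤ) - (((p.1 : ℕ) : ℤ) + 1) = y)).card : ℚ))
    / ((PlanePartitions a b c).card : ℚ)

theorem planePartitions_nonempty (a b c : ℕ) : (PlanePartitions a b c).Nonempty :=
  ⟨fun _ _ => 0, by simp [PlanePartitions]⟩

def diagonalCells (a b : ℕ) (x : ℤ) : Finset (Fin a × Fin b) :=
  univ.filter (fun p => ((p.2 : ℕ) : ℤ) - ((p.1 : ℕ) : ℤ) + (a : ℤ) = x)

def lozengeHeight {a b c : ℕ} (T : Fin a → Fin b → Fin (c + 1)) (p : Fin a × Fin b) : ℤ :=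
  ((T p.1 p.2 : ℕ) : ℤ) + (a : ℤ) - (((p.1 : ℕ) : ℤ) + 1)

theorem lozengeHeight_mem_Icc {a b c : ℕ} (T : Fin a → Fin b → Fin (c + 1))
    (p : Fin a × Fin b) : lozengeHeight T p ∈ Icc (0 : ℤ) ((a : ℤ) + c - 1) := by
  have hi := p.1.isLt
  have hT := (T p.1 p.2).isLt
  simp only [lozengeHeight, mem_Icc]
  omega

theorem sum_card_filter_lozengeHeight_eq {a b c : ℕ} (T : Fin a → Fin b → Fin (c + 1))
    (x : ℤ) :
    ∑ y ∈ Icc (0 : ℤ) ((a : ℤ) + c - 1),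
        #((diagonalCells a b x).filter (fun p => lozengeHeight T p = y)) =
      #(diagonalCells a b x) :=
  (card_eq_sum_card_fiberwise fun p _ => lozengeHeight_mem_Icc T p).symm

theorem P_eq_sum_card_div (a b c : ℕ) (x y : ℤ) :
    P a b c x y = (∑ T ∈ PlanePartitions a b c,
      (#((diagonalCells a b x).filter (fun p => lozengeHeight T p = y)) : ℚ)) /
        #(PlanePartitions a b c) := by
  simp_rw [P, diagonalCells, filter_filter]
  rfl

theorem sum_P_eq_card_diagonalCells (a b c : ℕ) (x : ℤ) :
    ∑ y ∈ Icc (0 : ℤ) ((a : ℤ) + c - 1), P a b c x y = #(diagonalCells a b x) := by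
  have hN : (#(PlanePartitions a b c) : ℚ) ≠ 0 := by
    exact_mod_cast (planePartitions_nonempty a b c).card_ne_zero
  simp only [P_eq_sum_card_div, ← sum_div]
  rw [sum_comm]
  simp only [← Nat.cast_sum, sum_card_filter_lozengeHeight_eq, sum_const, smul_eq_mul,
    Nat.cast_mul]
  field_simp

theorem card_diagonalCells_eq_card_Icc (a b : ℕ) (x : ℤ) :
    #(diagonalCells a b x) =
      #(Icc (max 0 ((a : ℤ) - x)) (min ((a : ℤ) - 1) ((a : ℤ) + b - 1 - x))) := by
  refine card_bij (fun p _ => ((p.1 : ℕ) : ℤ)) ?_ ?_ ?_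
  · rintro ⟨i, j⟩ hp
    have := j.isLt
    simp only [diagonalCells, mem_filter, mem_univ, true_and] at hp
    simp only [mem_Icc, max_le_iff, le_min_iff]
    omega
  · rintro ⟨i, j⟩ hp ⟨i', j'⟩ hp' hii'
    simp only [diagonalCells, mem_filter, mem_univ, true_and] at hp hp'
    dsimp only at hii'
    simp only [Prod.mk.injEq, Fin.ext_iff]
    omega
  · intro n hn
    simp only [mem_Icc, max_le_iff, le_min_iff] at hn
    refine ⟨(⟨n.toNat, by omega⟩, ⟨(x - a + n).toNat, by omega⟩), ?_, Int.toNat_of_nonneg hn.1.1⟩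
    simp only [diagonalCells, mem_filter, mem_univ, true_and]
    omega

theorem card_diagonalCells (a b : ℕ) (x : ℤ) :
    (#(diagonalCells a b x) : ℤ) = max 0 (min (min x ((a : ℤ) + b - x)) (min (a : ℤ) b)) := by
  rw [card_diagonalCells_eq_card_Icc, Int.card_Icc, Int.toNat_eq_max]
  omega

theorem column_sum_of_probabilities_general (a b c : ℕ) (x₀ : ℤ) :
    (1 ≤ x₀ → x₀ ≤ min (a : ℤ) (b : ℤ) →
      ∑ y ∈ Finset.Icc (0 : ℤ) ((a : ℤ) + c - 1), P a b c x₀ y = (x₀ : ℚ)) ∧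
    (min (a : ℤ) (b : ℤ) ≤ x₀ → x₀ ≤ max (a : ℤ) (b : ℤ) →
      ∑ y ∈ Finset.Icc (0 : ℤ) ((a : ℤ) + c - 1), P a b c x₀ y
        = ((min (a : ℤ) (b : ℤ) : ℤ) : ℚ)) ∧
    (max (a : ℤ) (b : ℤ) ≤ x₀ → x₀ ≤ (a : ℤ) + b - 1 →
      ∑ y ∈ Finset.Icc (0 : ℤ) ((a : ℤ) + c - 1), P a b c x₀ y
        = (a : ℚ) + b - (x₀ : ℚ)) := by
  set d := max 0 (min (min x₀ ((a : ℤ) + b - x₀)) (min (a : ℤ) b)) with hd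
  have hsum : ∑ y ∈ Icc (0 : ℤ) ((a : ℤ) + c - 1), P a b c x₀ y = (d : ℚ) := by
    rw [sum_P_eq_card_diagonalCells, hd, ← card_diagonalCells, Int.cast_natCast]
  refine ⟨fun h₁ h₂ => ?_, fun h₁ h₂ => ?_, fun h₁ h₂ => ?_⟩ <;> rw [hsum]
  · exact_mod_cast (by omega : d = x₀)
  · exact_mod_cast (by omega : d = min (a : ℤ) b)
  · exact_mod_cast (by omega : d = (a : ℤ) + b - x₀)

theorem column_sum_of_probabilities (a b c : ℕ) (ha : 0 < a) (hb : 0 < b) (hc : 0 < c)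
    (x₀ : ℤ) (hx0 : 1 ≤ x₀) (hx1 : x₀ ≤ (a : ℤ) + b - 1) :
    (1 ≤ x₀ → x₀ ≤ min (a : ℤ) (b : ℤ) →
      ∑ y ∈ Finset.Icc (0 : ℤ) ((a : ℤ) + c - 1), P a b c x₀ y = (x₀ : ℚ)) ∧
    (min (a : ℤ) (b : ℤ) ≤ x₀ → x₀ ≤ max (a : ℤ) (b : ℤ) →
      ∑ y ∈ Finset.Icc (0 : ℤ) ((a : ℤ) + c - 1), P a b c x₀ y
        = ((min (a : ℤ) (b : ℤ) : ℤ) : ℚ)) ∧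
    (max (a : ℤ) (b : ℤ) ≤ x₀ → x₀ ≤ (a : ℤ) + b - 1 →
      ∑ y ∈ Finset.Icc (0 : ℤ) ((a : ℤ) + c - 1), P a b c x₀ y
        = (a : ℚ) + b - (x₀ : ℚ)) :=
  column_sum_of_probabilities_general a b c x₀
end

section
/- Let a, b, c be positive integers with a ≥ b and let x₀ be an integer with 1 ≤ x₀ ≤ a+b−1. Then Σ_{y=0}^{a+c-1} P_{a,b,c}(x₀, y) · (y − (a+c−1)/2) equals (−a² − ab − ac + bc + a·x₀ + b·x₀)·x₀ / (2(a+b)) if 1 ≤ x₀ ≤ b; equals −b·(a + b + c)·(a + b − 2x₀) / (2(a+b)) if b ≤ x₀ ≤ a; and equals (−b² − ab − bc + ac + a·x₀ + b·x₀)·(a + b − x₀) / (2(a+b)) if a ≤ x₀ ≤ a+b−1. -/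
open Finset

/-!
Averaged over the `N` plane partitions, the left-hand side is `1/N` times the sum of
`T(i,j) + a - 1 - i - (a + c - 1)/2` over all `T` and all cells `(i,j)` (0-based) of the diagonal
`j - i = x₀ - a`. The row terms form an arithmetic progression, so everything reduces to the total
`D k` of the entries on the diagonal `j - i = k` over all plane partitions, each partition padded
by `c` above and to the left of the box.

The toggle on the diagonal `k` (an involution of plane partitions, in the spirit of Bender–Knuth)
replaces each entry `v` there by `max + min - v`, where `[min, max]` is the interval allowed by its
neighbours. Along the diagonal the neighbours' extremes telescope, giving
`D (k + 1) + D (k - 1) = 2 D k` for `1 - a ≤ k ≤ -1`, so `D` is affine on `[-a, 0]` with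
`D (-a) = c a N`. Complementation `v ↦ c - v` after a half-turn gives
`D k + D (b - a - k) = c a N`, which fixes the slope: `(a + b) D k = c a N (b - k)` for
`-a ≤ k ≤ b` when `b ≤ a`.
-/

theorem Finset.sum_range_min_add_max {G : Type*} [AddCommGroup G] [LinearOrder G]
    (u v : ℕ → G) (n : ℕ) :
    ∑ i ∈ range n, (min (u i) (v i) + max (u (i + 1)) (v (i + 1))) =
      min (u 0) (v 0) - min (u n) (v n) + ∑ i ∈ range n, (u (i + 1) + v (i + 1)) := by
  rw [← sum_range_sub' (fun i => min (u i) (v i)), ← sum_add_distrib]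
  refine sum_congr rfl fun i _ => ?_
  rw [← min_add_max (u (i + 1)) (v (i + 1))]
  abel

theorem eq_add_nsmul_of_add_eq_two_nsmul {G : Type*} [AddCommGroup G] {f : ℕ → G} {N : ℕ}
    (h : ∀ n, n + 2 ≤ N → f (n + 2) + f n = 2 • f (n + 1)) :
    ∀ n ≤ N, f n = f 0 + n • (f 1 - f 0) := by
  have hdiff : ∀ n, n + 1 ≤ N → f (n + 1) - f n = f 1 - f 0 := by
    intro n hn
    induction n with
    | zero => rfl
    | succ n ih =>
      rw [← ih (by omega), sub_eq_sub_iff_add_eq_add, h n hn, two_nsmul]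
  intro n hn
  induction n with
  | zero => simp
  | succ n ih =>
    rw [← sub_add_cancel (f (n + 1)) (f n), hdiff n hn, ih (by omega), succ_nsmul]
    abel

theorem Finset.two_mul_sum_Ico_sub {R : Type*} [CommRing R] {m n : ℕ} (h : m ≤ n) (q : R) :
    2 * ∑ i ∈ Ico m n, (q - i) = (n - m) * (2 * q - m - n + 1) := by
  induction n, h using Nat.le_induction with
  | base => simp
  | succ n hmn ih =>
    rw [sum_Ico_succ_top hmn, mul_add, ih]
    push_cast
    ring

namespace PlanePartitions

variable {a b c : ℕ}

theorem mem_iff {T : Fin a → Fin b → Fin (c + 1)} :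
    T ∈ PlanePartitions a b c ↔
      (∀ i : Fin a, ∀ j j' : Fin b, j ≤ j' → T i j' ≤ T i j) ∧
      (∀ i i' : Fin a, ∀ j : Fin b, i ≤ i' → T i' j ≤ T i j) := by
  simp [PlanePartitions]

/-- The entries of `T` with 0-based integer indices, padded by `c` above and to the left of the
box and by `0` below and to the right of it, so that a plane partition stays weakly decreasing
in both directions on all of `ℤ × ℤ`. -/
def extend (T : Fin a → Fin b → Fin (c + 1)) (i j : ℤ) : ℤ :=
  if h : 0 ≤ i ∧ i < a ∧ 0 ≤ j ∧ j < b then T ⟨i.toNat, by omega⟩ ⟨j.toNat, by omega⟩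
  else if i < a ∧ j < b then c else 0

section extend

variable (T : Fin a → Fin b → Fin (c + 1))

theorem extend_coe (i : Fin a) (j : Fin b) : extend T i j = T i j := by
  simp [extend]

theorem extend_of_le {i j : ℤ} (h : a ≤ i ∨ b ≤ j) : extend T i j = 0 := by
  unfold extend
  rw [dif_neg (by omega), if_neg (by omega)]

theorem extend_of_neg {i j : ℤ} (hi : i < a) (hj : j < b) (h : i < 0 ∨ j < 0) :
    extend T i j = c := by
  unfold extend
  rw [dif_neg (by omega), if_pos ⟨hi, hj⟩]

theorem extend_nonneg (i j : ℤ) : 0 ≤ extend T i j := by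
  unfold extend; split_ifs <;> positivity

theorem extend_le (i j : ℤ) : extend T i j ≤ c := by
  unfold extend
  split_ifs
  · exact_mod_cast Nat.le_of_lt_succ (Fin.is_lt _)
  · rfl
  · positivity

theorem exists_coe_eq_of_mem {i j : ℤ} (hi : 0 ≤ i ∧ i < a) (hj : 0 ≤ j ∧ j < b) :
    ∃ (i' : Fin a) (j' : Fin b), (i' : ℤ) = i ∧ (j' : ℤ) = j :=
  ⟨⟨i.toNat, by omega⟩, ⟨j.toNat, by omega⟩, by simp; omega, by simp; omega⟩

variable {T}

theorem extend_antitone (hT : T ∈ PlanePartitions a b c) {i i' j j' : ℤ} (hi : i ≤ i')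
    (hj : j ≤ j') : extend T i' j' ≤ extend T i j := by
  rcases em (a ≤ i' ∨ b ≤ j') with hout | hin
  · exact (extend_of_le T hout).trans_le (extend_nonneg T i j)
  rcases em (i < 0 ∨ j < 0) with hneg | hpos
  · exact (extend_of_neg T (by omega) (by omega) hneg).symm ▸ extend_le T i' j'
  obtain ⟨i, j, rfl, rfl⟩ :=
    exists_coe_eq_of_mem (a := a) (b := b) (i := i) (j := j) (by omega) (by omega)
  obtain ⟨i', j', rfl, rfl⟩ :=
    exists_coe_eq_of_mem (a := a) (b := b) (i := i') (j := j') (by omega) (by omega)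
  simp only [extend_coe, Nat.cast_le, ← Fin.le_def]
  have hii' : i ≤ i' := by rw [Fin.le_def]; omega
  have hjj' : j ≤ j' := by rw [Fin.le_def]; omega
  exact ((mem_iff.1 hT).2 i i' j' hii').trans ((mem_iff.1 hT).1 i j j' hjj')

theorem mem_of_extend_succ_le (h : ∀ i j : ℤ,
    extend T (i + 1) j ≤ extend T i j ∧ extend T i (j + 1) ≤ extend T i j) :
    T ∈ PlanePartitions a b c := by
  refine mem_iff.2 ⟨fun i j j' hj => ?_, fun i i' j hi => ?_⟩
  · have := antitone_int_of_succ_le (fun n => (h i n).2) (show (j : ℤ) ≤ j' by simpa)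
    simpa only [extend_coe, Nat.cast_le, ← Fin.le_def] using this
  · have := antitone_int_of_succ_le (f := fun n => extend T n j) (fun n => (h n j).1)
      (show (i : ℤ) ≤ i' by simpa)
    simpa only [extend_coe, Nat.cast_le, ← Fin.le_def] using this

end extend

variable {T : Fin a → Fin b → Fin (c + 1)} {k : ℤ}

def maxEntry (T : Fin a → Fin b → Fin (c + 1)) (i j : ℤ) : ℤ :=
  min (extend T (i - 1) j) (extend T i (j - 1))

def minEntry (T : Fin a → Fin b → Fin (c + 1)) (i j : ℤ) : ℤ :=
  max (extend T (i + 1) j) (extend T i (j + 1))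

/-- The neighbours that bound an entry on the diagonal `j - i = k` lie off that diagonal, so the
toggle is an involution. The truncation at `c` only matters when `T` is not a plane partition. -/
def toggle (k : ℤ) (T : Fin a → Fin b → Fin (c + 1)) : Fin a → Fin b → Fin (c + 1) :=
  fun i j => if (j : ℤ) - i = k then
    ⟨min (maxEntry T i j + minEntry T i j - T i j).toNat c, by omega⟩ else T i j

theorem minEntry_le_extend (hT : T ∈ PlanePartitions a b c) (i j : ℤ) :
    minEntry T i j ≤ extend T i j :=
  max_le (extend_antitone hT (by omega) le_rfl) (extend_antitone hT le_rfl (by omega))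

theorem extend_le_maxEntry (hT : T ∈ PlanePartitions a b c) (i j : ℤ) :
    extend T i j ≤ maxEntry T i j :=
  le_min (extend_antitone hT (by omega) le_rfl) (extend_antitone hT le_rfl (by omega))

theorem toggle_of_ne {i : Fin a} {j : Fin b} (hd : (j : ℤ) - i ≠ k) : toggle k T i j = T i j :=
  if_neg hd

theorem coe_toggle_of_eq (hT : T ∈ PlanePartitions a b c) {i : Fin a} {j : Fin b}
    (hd : (j : ℤ) - i = k) :
    (toggle k T i j : ℤ) = maxEntry T i j + minEntry T i j - T i j := by
  have hmin := minEntry_le_extend hT i j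
  have hmax := extend_le_maxEntry hT i j
  have hc : maxEntry T i j ≤ c := (min_le_left _ _).trans (extend_le T _ _)
  have h0 : 0 ≤ minEntry T i j := (extend_nonneg T _ _).trans (le_max_left _ _)
  rw [extend_coe] at hmin hmax
  simp only [toggle, if_pos hd]
  omega

theorem extend_toggle_of_ne {i j : ℤ} (hd : j - i ≠ k) :
    extend (toggle k T) i j = extend T i j := by
  unfold extend
  split_ifs with h
  · rw [toggle_of_ne (by simp; omega)]
  all_goals rfl

theorem extend_toggle_of_not_mem {i j : ℤ} (h : ¬((0 ≤ i ∧ i < a) ∧ 0 ≤ j ∧ j < b)) :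
    extend (toggle k T) i j = extend T i j := by
  unfold extend
  rw [dif_neg (by omega), dif_neg (by omega)]

theorem extend_toggle_of_eq (hT : T ∈ PlanePartitions a b c) {i j : ℤ} (hd : j - i = k)
    (hi : 0 ≤ i ∧ i < a) (hj : 0 ≤ j ∧ j < b) :
    extend (toggle k T) i j = maxEntry T i j + minEntry T i j - extend T i j := by
  obtain ⟨i, j, rfl, rfl⟩ := exists_coe_eq_of_mem hi hj
  rw [extend_coe, extend_coe, coe_toggle_of_eq hT hd]

theorem minEntry_le_extend_toggle (hT : T ∈ PlanePartitions a b c) {i j : ℤ} (hd : j - i = k) :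
    minEntry T i j ≤ extend (toggle k T) i j := by
  rcases em ((0 ≤ i ∧ i < a) ∧ 0 ≤ j ∧ j < b) with ⟨hi, hj⟩ | hout
  · rw [extend_toggle_of_eq hT hd hi hj]
    linarith [extend_le_maxEntry hT i j]
  · exact (extend_toggle_of_not_mem hout).symm ▸ minEntry_le_extend hT i j

theorem extend_toggle_le_maxEntry (hT : T ∈ PlanePartitions a b c) {i j : ℤ} (hd : j - i = k) :
    extend (toggle k T) i j ≤ maxEntry T i j := by
  rcases em ((0 ≤ i ∧ i < a) ∧ 0 ≤ j ∧ j < b) with ⟨hi, hj⟩ | hout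
  · rw [extend_toggle_of_eq hT hd hi hj]
    linarith [minEntry_le_extend hT i j]
  · exact (extend_toggle_of_not_mem hout).symm ▸ extend_le_maxEntry hT i j

theorem toggle_mem (hT : T ∈ PlanePartitions a b c) : toggle k T ∈ PlanePartitions a b c := by
  refine mem_of_extend_succ_le fun i j => ⟨?_, ?_⟩
  · by_cases hd : j - i = k
    · rw [extend_toggle_of_ne (by omega)]
      exact (le_max_left _ _).trans (minEntry_le_extend_toggle hT hd)
    by_cases hd' : j - (i + 1) = k
    · rw [extend_toggle_of_ne hd]
      refine (extend_toggle_le_maxEntry hT hd').trans ((min_le_left _ _).trans_eq ?_)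
      rw [add_sub_cancel_right]
    rw [extend_toggle_of_ne hd, extend_toggle_of_ne hd']
    exact extend_antitone hT (by omega) le_rfl
  · by_cases hd : j - i = k
    · rw [extend_toggle_of_ne (by omega)]
      exact (le_max_right _ _).trans (minEntry_le_extend_toggle hT hd)
    by_cases hd' : j + 1 - i = k
    · rw [extend_toggle_of_ne hd]
      refine (extend_toggle_le_maxEntry hT hd').trans ((min_le_right _ _).trans_eq ?_)
      rw [add_sub_cancel_right]
    rw [extend_toggle_of_ne hd, extend_toggle_of_ne hd']
    exact extend_antitone hT le_rfl (by omega)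

theorem maxEntry_toggle {i j : ℤ} (hd : j - i = k) :
    maxEntry (toggle k T) i j = maxEntry T i j := by
  rw [maxEntry, maxEntry, extend_toggle_of_ne (by omega), extend_toggle_of_ne (by omega)]

theorem minEntry_toggle {i j : ℤ} (hd : j - i = k) :
    minEntry (toggle k T) i j = minEntry T i j := by
  rw [minEntry, minEntry, extend_toggle_of_ne (by omega), extend_toggle_of_ne (by omega)]

theorem toggle_toggle (hT : T ∈ PlanePartitions a b c) : toggle k (toggle k T) = T := by
  funext i j
  by_cases hd : (j : ℤ) - i = k
  · have h := coe_toggle_of_eq (toggle_mem (k := k) hT) hd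
    rw [maxEntry_toggle hd, minEntry_toggle hd, coe_toggle_of_eq hT hd] at h
    exact Fin.ext (by omega)
  · rw [toggle_of_ne hd, toggle_of_ne hd]

def diagSum (T : Fin a → Fin b → Fin (c + 1)) (k : ℤ) : ℤ :=
  ∑ i ∈ range a, extend T i (i + k)

theorem extend_toggle_add_extend (hT : T ∈ PlanePartitions a b c) (hk : 1 - a ≤ k)
    {i : ℤ} (hi : 0 ≤ i) (hia : i < a) :
    extend (toggle k T) i (i + k) + extend T i (i + k) =
      maxEntry T i (i + k) + minEntry T i (i + k) := by
  rcases lt_or_ge (i + k) 0 with hneg | hnn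
  · have hmax : maxEntry T i (i + k) = c := by
      rw [maxEntry, extend_of_neg T (by omega) (by omega) (.inr hneg),
        extend_of_neg T hia (by omega) (.inr (by omega)), min_self]
    have hmin : minEntry T i (i + k) = c := by
      rw [minEntry, extend_of_neg T (by omega) (by omega) (.inr hneg)]
      exact max_eq_left (extend_le T _ _)
    rw [extend_toggle_of_not_mem (by omega), extend_of_neg T hia (by omega) (.inr hneg), hmax,
      hmin]
  rcases lt_or_ge (i + k) b with hb | hb
  · rw [extend_toggle_of_eq hT (by ring) ⟨hi, hia⟩ ⟨hnn, hb⟩]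
    ring
  · have hmax : maxEntry T i (i + k) = 0 := by
      rw [maxEntry, extend_of_le T (.inr hb)]
      exact min_eq_left (extend_nonneg T _ _)
    have hmin : minEntry T i (i + k) = 0 := by
      rw [minEntry, extend_of_le T (.inr hb), extend_of_le T (.inr (by omega)), max_self]
    rw [extend_toggle_of_not_mem (by omega), extend_of_le T (.inr hb), hmax, hmin]

theorem diagSum_toggle_add (hT : T ∈ PlanePartitions a b c) (hk : 1 - a ≤ k) (hk' : k ≤ -1) :
    diagSum (toggle k T) k + diagSum T k = diagSum T (k + 1) + diagSum T (k - 1) := by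
  set u : ℕ → ℤ := fun n => extend T (n - 1) (n + k)
  set v : ℕ → ℤ := fun n => extend T n (n + k - 1)
  have hpoint : ∀ n ∈ range a, extend (toggle k T) n (n + k) + extend T n (n + k) =
      min (u n) (v n) + max (u (n + 1)) (v (n + 1)) := by
    intro n hn
    rw [extend_toggle_add_extend hT hk (by omega) (by simpa using hn), maxEntry, minEntry,
      max_comm]
    simp only [u, v]
    push_cast
    ring_nf
  have hu : ∑ n ∈ range a, u (n + 1) = diagSum T (k + 1) :=
    sum_congr rfl fun n _ => by simp only [u]; push_cast; ring_nf
  have hv : ∑ n ∈ range a, v (n + 1) + v 0 = diagSum T (k - 1) + v a := by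
    rw [← sum_range_succ', sum_range_succ]
    exact congrArg (· + v a) (sum_congr rfl fun n _ => by simp only [v]; ring_nf)
  have hu0 : u 0 = c := extend_of_neg T (by omega) (by omega) (.inl (by omega))
  have hv0 : v 0 = c := extend_of_neg T (by omega) (by omega) (.inr (by omega))
  have hva : v a = 0 := extend_of_le T (.inl le_rfl)
  have hmin : min (u a) (v a) = 0 := by rw [hva]; exact min_eq_right (extend_nonneg T _ _)
  rw [diagSum, diagSum, ← sum_add_distrib, sum_congr rfl hpoint, sum_range_min_add_max,
    sum_add_distrib, hu, hu0, hv0, hmin, min_self]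
  linear_combination hv + hva - hv0

/-- A half-turn of the box combined with `v ↦ c - v`, which is `Fin.rev` on `Fin (c + 1)`. -/
def complement (T : Fin a → Fin b → Fin (c + 1)) : Fin a → Fin b → Fin (c + 1) :=
  fun i j => (T i.rev j.rev).rev

theorem complement_mem (hT : T ∈ PlanePartitions a b c) :
    complement T ∈ PlanePartitions a b c := by
  refine mem_iff.2 ⟨fun i j j' hj => ?_, fun i i' j hi => ?_⟩ <;>
    simp only [complement, Fin.rev_le_rev]
  · exact (mem_iff.1 hT).1 _ _ _ (Fin.rev_le_rev.2 hj)
  · exact (mem_iff.1 hT).2 _ _ _ (Fin.rev_le_rev.2 hi)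

theorem complement_complement (T : Fin a → Fin b → Fin (c + 1)) :
    complement (complement T) = T := by
  funext i j
  simp [complement]

theorem extend_complement (T : Fin a → Fin b → Fin (c + 1)) {i : ℤ} (hi : 0 ≤ i ∧ i < a)
    (j : ℤ) : extend (complement T) i j = c - extend T (a - 1 - i) (b - 1 - j) := by
  rcases lt_or_ge j 0 with hj | hj
  · rw [extend_of_neg _ hi.2 (by omega) (.inr hj), extend_of_le T (.inr (by omega)), sub_zero]
  rcases lt_or_ge j b with hjb | hjb
  · obtain ⟨i, j, rfl, rfl⟩ := exists_coe_eq_of_mem hi ⟨hj, hjb⟩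
    have hrev : extend T (a - 1 - i) (b - 1 - j) = T i.rev j.rev := by
      rw [← extend_coe]; congr 1 <;> simp [Fin.val_rev] <;> omega
    rw [extend_coe, hrev, complement, Fin.val_rev]
    have := (T i.rev j.rev).is_lt
    omega
  · rw [extend_of_le _ (.inr hjb), extend_of_neg T (by omega) (by omega) (.inr (by omega)),
      sub_self]

theorem diagSum_complement (T : Fin a → Fin b → Fin (c + 1)) (k : ℤ) :
    diagSum (complement T) k = c * a - diagSum T (b - a - k) := by
  rw [diagSum, diagSum, ← sum_range_reflect, sum_congr rfl fun n hn =>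
    extend_complement T (i := ((a - 1 - n : ℕ) : ℤ)) (by simp at hn; omega) _, sum_sub_distrib,
    sum_const, card_range, nsmul_eq_mul, mul_comm]
  congr 1
  refine sum_congr rfl fun n hn => ?_
  simp only [mem_range] at hn
  rw [show ((a - 1 - n : ℕ) : ℤ) = a - 1 - n by omega]
  congr 1 <;> ring

variable (a b c) in
def totalDiagSum (k : ℤ) : ℤ :=
  ∑ T ∈ PlanePartitions a b c, diagSum T k

theorem totalDiagSum_succ_add_pred (hk : 1 - a ≤ k) (hk' : k ≤ -1) :
    totalDiagSum a b c (k + 1) + totalDiagSum a b c (k - 1) = 2 * totalDiagSum a b c k := by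
  have hinv : ∑ T ∈ PlanePartitions a b c, diagSum (toggle k T) k = totalDiagSum a b c k :=
    sum_nbij' (toggle k) (toggle k) (fun _ => toggle_mem) (fun _ => toggle_mem)
      (fun _ => toggle_toggle) (fun _ => toggle_toggle) (fun _ _ => rfl)
  rw [totalDiagSum, totalDiagSum, ← sum_add_distrib,
    ← sum_congr rfl fun T hT => diagSum_toggle_add hT hk hk', sum_add_distrib, hinv,
    totalDiagSum]
  ring

theorem totalDiagSum_neg_a : totalDiagSum a b c (-a) = c * a * #(PlanePartitions a b c) := by
  have h : ∀ T : Fin a → Fin b → Fin (c + 1), diagSum T (-a) = c * a := fun T => by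
    have hc : ∀ n ∈ range a, extend T n (n + -a) = c := fun n hn =>
      extend_of_neg T (by simpa using hn) (by simp at hn; omega) (.inr (by simp at hn; omega))
    rw [diagSum, sum_congr rfl hc, sum_const, card_range, nsmul_eq_mul, mul_comm]
  simp only [totalDiagSum, h, sum_const, nsmul_eq_mul]
  ring

theorem totalDiagSum_add_totalDiagSum_sub (k : ℤ) :
    totalDiagSum a b c k + totalDiagSum a b c (b - a - k) = c * a * #(PlanePartitions a b c) := by
  have hinv : ∑ T ∈ PlanePartitions a b c, diagSum (complement T) k = totalDiagSum a b c k :=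
    sum_nbij' complement complement (fun _ => complement_mem) (fun _ => complement_mem)
      (fun T _ => complement_complement T) (fun T _ => complement_complement T) (fun _ _ => rfl)
  rw [← hinv, sum_congr rfl fun T _ => diagSum_complement T k, sum_sub_distrib, sum_const,
    nsmul_eq_mul, totalDiagSum]
  ring

theorem add_mul_totalDiagSum (hab : b ≤ a) (hk : -a ≤ k) (hk' : k ≤ b) :
    (a + b) * totalDiagSum a b c k = c * a * #(PlanePartitions a b c) * (b - k) := by
  set N : ℤ := ((PlanePartitions a b c).card : ℤ)
  set s := totalDiagSum a b c (1 - a) - c * a * N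
  have hlin : ∀ k : ℤ, -a ≤ k → k ≤ 0 →
      totalDiagSum a b c k = c * a * N + (k + a) * s := by
    have h := eq_add_nsmul_of_add_eq_two_nsmul (f := fun n : ℕ => totalDiagSum a b c (n - a))
      (N := a) fun n hn => by
        have := totalDiagSum_succ_add_pred (a := a) (b := b) (c := c) (k := n + 1 - a) (by omega)
          (by omega)
        push_cast
        convert this using 3 <;> ring_nf
    intro k hk hk'
    have := h (k + a).toNat (by omega)
    simp only [Nat.cast_zero, zero_sub, Nat.cast_one, totalDiagSum_neg_a, nsmul_eq_mul] at this
    rwa [Int.toNat_of_nonneg (by omega), add_sub_cancel_right] at this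
  have hs : (a + b) * s = -(c * a * N) := by
    have := totalDiagSum_add_totalDiagSum_sub (a := a) (b := b) (c := c) 0
    rw [hlin 0 (by omega) le_rfl, hlin (b - a - 0) (by omega) (by omega)] at this
    linear_combination this
  rcases le_total k 0 with hk0 | hk0
  · rw [hlin k hk hk0]
    linear_combination (k + a) * hs
  · have := totalDiagSum_add_totalDiagSum_sub (a := a) (b := b) (c := c) k
    rw [hlin (b - a - k) (by omega) (by omega)] at this
    linear_combination (a + b) * this - (b - k) * hs

def diagonal (a b : ℕ) (k : ℤ) : Finset (Fin a × Fin b) :=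
  univ.filter fun p => (p.2 : ℤ) - p.1 = k

theorem sum_diagonal {M : Type*} [AddCommMonoid M] (T : Fin a → Fin b → Fin (c + 1)) (k : ℤ)
    (F : ℤ → ℤ → M) :
    ∑ p ∈ diagonal a b k, F p.1 (T p.1 p.2) =
      ∑ i ∈ Ico (-k).toNat (min a (b - k).toNat), F i (extend T i (i + k)) := by
  refine sum_bij' (fun p _ => (p.1 : ℕ))
    (fun i hi => (⟨i, by simp at hi; omega⟩, ⟨(i + k).toNat, by simp at hi; omega⟩))
    (fun p hp => ?_) (fun i hi => ?_) (fun p hp => ?_) (fun i hi => rfl) (fun p hp => ?_)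
  · simp only [diagonal, mem_filter, mem_univ, true_and] at hp
    simp only [mem_Ico]
    omega
  · simp only [mem_Ico] at hi
    simp only [diagonal, mem_filter, mem_univ, true_and]
    omega
  · simp only [diagonal, mem_filter, mem_univ, true_and] at hp
    ext <;> simp
    omega
  · simp only [diagonal, mem_filter, mem_univ, true_and] at hp
    rw [← extend_coe]
    congr 2
    omega

theorem diagSum_eq_sum_Ico (T : Fin a → Fin b → Fin (c + 1)) {k : ℤ} (hk : -a ≤ k) :
    diagSum T k =
      c * (-k).toNat + ∑ i ∈ Ico (-k).toNat (min a (b - k).toNat), extend T i (i + k) := by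
  have hleft : ∀ i ∈ range (-k).toNat, extend T i (i + k) = c := fun i hi =>
    extend_of_neg T (by simp at hi; omega) (by simp at hi; omega) (.inr (by simp at hi; omega))
  have hright : ∀ i ∈ Ico (min a (b - k).toNat) a, extend T i (i + k) = 0 := fun i hi =>
    extend_of_le T (.inr (by simp at hi; omega))
  rw [diagSum, ← sum_range_add_sum_Ico _ (show (-k).toNat ≤ a by omega),
    ← sum_Ico_consecutive _ (show (-k).toNat ≤ min a (b - k).toNat by omega) (min_le_left _ _),
    sum_congr rfl hleft, sum_congr rfl hright, sum_const, card_range, nsmul_eq_mul, sum_const_zero,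
    add_zero, mul_comm]

theorem sum_P_mul (x : ℤ) (w : ℤ → ℚ) :
    ∑ y ∈ Icc (0 : ℤ) (a + c - 1), P a b c x y * w y =
      (∑ T ∈ PlanePartitions a b c, ∑ p ∈ diagonal a b (x - a),
        w ((T p.1 p.2 : ℤ) + a - (p.1 + 1))) / #(PlanePartitions a b c) := by
  have hfiber : ∀ T : Fin a → Fin b → Fin (c + 1),
      ∑ y ∈ Icc (0 : ℤ) (a + c - 1), (#(univ.filter fun p : Fin a × Fin b =>
        (p.2 : ℤ) - p.1 + a = x ∧ (T p.1 p.2 : ℤ) + a - (p.1 + 1) = y) : ℚ) * w y =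
      ∑ p ∈ diagonal a b (x - a), w ((T p.1 p.2 : ℤ) + a - (p.1 + 1)) := fun T => by
    rw [← sum_fiberwise_of_maps_to' (t := Icc (0 : ℤ) (a + c - 1)) fun p _ => by
      simp only [mem_Icc]; have := (T p.1 p.2).is_lt; have := p.1.is_lt; omega]
    refine sum_congr rfl fun y _ => ?_
    rw [sum_const, nsmul_eq_mul, diagonal, filter_filter]
    congr 4
    ext p
    omega
  simp only [P, div_mul_eq_mul_div, sum_mul, ← sum_div]
  rw [sum_comm, sum_congr rfl fun T _ => hfiber T]

theorem sum_P_mul_centered (hab : b ≤ a) {x : ℤ} (hx : 1 ≤ x) (hx' : x ≤ a + b) :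
    ∑ y ∈ Icc (0 : ℤ) (a + c - 1), P a b c x y * (y - (a + c - 1) / 2) =
      c * a * (a + b - x) / (a + b) - c * (max 0 ((a : ℤ) - x) : ℤ)
        + ((min (a : ℤ) (a + b - x) - max 0 ((a : ℤ) - x) : ℤ) : ℚ)
          * ((a - c - max 0 ((a : ℤ) - x) - min (a : ℤ) (a + b - x) : ℤ) : ℚ) / 2 := by
  set k := x - a
  set lo := (-k).toNat
  set hi := min a (b - k).toNat
  set N := #(PlanePartitions a b c)
  have hN : (N : ℚ) ≠ 0 := by
    refine Nat.cast_ne_zero.2 (card_ne_zero_of_mem (s := PlanePartitions a b c)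
      (a := fun _ _ => 0) ?_)
    simp [mem_iff]
  have hrow : ∀ T : Fin a → Fin b → Fin (c + 1),
      ∑ p ∈ diagonal a b k, (((T p.1 p.2 : ℤ) + a - (p.1 + 1) : ℤ) - (a + c - 1) / 2 : ℚ) =
        (diagSum T k - c * lo : ℤ) + ∑ i ∈ Ico lo hi, ((a - c - 1) / 2 - i : ℚ) := fun T => by
    rw [sum_diagonal T k fun i v => (((v + a - (i + 1) : ℤ) : ℚ) - (a + c - 1) / 2),
      diagSum_eq_sum_Ico T (by omega), add_sub_cancel_left, Int.cast_sum, ← sum_add_distrib]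
    refine sum_congr rfl fun i _ => ?_
    push_cast
    ring
  have htotal := add_mul_totalDiagSum (c := c) hab (k := k) (by omega) (by omega)
  have hgauss := two_mul_sum_Ico_sub (show lo ≤ hi by omega) ((a - c - 1) / 2 : ℚ)
  have hlo : (lo : ℤ) = max 0 ((a : ℤ) - x) := by omega
  have hhi : (hi : ℤ) = min (a : ℤ) (a + b - x) := by omega
  have hab0 : (a + b : ℚ) ≠ 0 := by norm_cast; omega
  have hD : (totalDiagSum a b c k : ℚ) / N = c * a * (a + b - x) / (a + b) := by
    rw [div_eq_div_iff hN hab0]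
    have := congrArg (fun z : ℤ => (z : ℚ)) htotal
    push_cast [k] at this
    linear_combination this
  calc ∑ y ∈ Icc (0 : ℤ) (a + c - 1), P a b c x y * (y - (a + c - 1) / 2)
      = (∑ T ∈ PlanePartitions a b c, ((diagSum T k - c * lo : ℤ) : ℚ)) / N
          + ∑ i ∈ Ico lo hi, ((a - c - 1) / 2 - i : ℚ) := by
        rw [sum_P_mul, sum_congr rfl fun T _ => hrow T, sum_add_distrib, sum_const, nsmul_eq_mul,
          add_div, mul_div_cancel_left₀ _ hN]
    _ = (totalDiagSum a b c k : ℚ) / N - c * lo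
          + ∑ i ∈ Ico lo hi, ((a - c - 1) / 2 - i : ℚ) := by
        rw [← Int.cast_sum, sum_sub_distrib, sum_const, nsmul_eq_mul, ← totalDiagSum]
        push_cast
        rw [sub_div, mul_div_cancel_left₀ _ hN]
    _ = _ := by
        rw [hD, ← hlo, ← hhi]
        push_cast
        linear_combination hgauss / 2

end PlanePartitions

theorem weighted_column_sum_b_le_a_general (a b c : ℕ) (hab : b ≤ a) (x₀ : ℤ) (hx0 : 1 ≤ x₀) :
    (1 ≤ x₀ → x₀ ≤ (b : ℤ) →
      ∑ y ∈ Finset.Icc (0 : ℤ) ((a : ℤ) + c - 1),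
          P a b c x₀ y * ((y : ℚ) - ((a : ℚ) + c - 1) / 2)
        = (-(a : ℚ) ^ 2 - a * b - a * c + b * c + a * (x₀ : ℚ) + b * (x₀ : ℚ)) * (x₀ : ℚ)
            / (2 * ((a : ℚ) + b))) ∧
    ((b : ℤ) ≤ x₀ → x₀ ≤ (a : ℤ) →
      ∑ y ∈ Finset.Icc (0 : ℤ) ((a : ℤ) + c - 1),
          P a b c x₀ y * ((y : ℚ) - ((a : ℚ) + c - 1) / 2)
        = -(b : ℚ) * ((a : ℚ) + b + c) * ((a : ℚ) + b - 2 * (x₀ : ℚ))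
            / (2 * ((a : ℚ) + b))) ∧
    ((a : ℤ) ≤ x₀ → x₀ ≤ (a : ℤ) + b - 1 →
      ∑ y ∈ Finset.Icc (0 : ℤ) ((a : ℤ) + c - 1),
          P a b c x₀ y * ((y : ℚ) - ((a : ℚ) + c - 1) / 2)
        = (-(b : ℚ) ^ 2 - a * b - b * c + a * c + a * (x₀ : ℚ) + b * (x₀ : ℚ))
            * ((a : ℚ) + b - (x₀ : ℚ)) / (2 * ((a : ℚ) + b))) := by
  have key := PlanePartitions.sum_P_mul_centered (c := c) hab hx0
  refine ⟨fun _ hb => ?_, fun hb ha => ?_, fun ha hab' => ?_⟩ <;>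
    have hab0 : (a + b : ℚ) ≠ 0 := by norm_cast; omega
  · rw [key (by omega), max_eq_right (by omega), min_eq_left (by omega)]
    push_cast
    field_simp
    ring
  · rw [key (by omega), max_eq_right (by omega), min_eq_right (by omega)]
    push_cast
    field_simp
    ring
  · rw [key (by omega), max_eq_left (by omega), min_eq_right (by omega)]
    push_cast
    field_simp
    ring

theorem weighted_column_sum_b_le_a (a b c : ℕ) (ha : 0 < a) (hb : 0 < b) (hc : 0 < c)
    (hab : b ≤ a) (x₀ : ℤ) (hx0 : 1 ≤ x₀) (hx1 : x₀ ≤ (a : ℤ) + b - 1) :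
    (1 ≤ x₀ → x₀ ≤ (b : ℤ) →
      ∑ y ∈ Finset.Icc (0 : ℤ) ((a : ℤ) + c - 1),
          P a b c x₀ y * ((y : ℚ) - ((a : ℚ) + c - 1) / 2)
        = (-(a : ℚ) ^ 2 - a * b - a * c + b * c + a * (x₀ : ℚ) + b * (x₀ : ℚ)) * (x₀ : ℚ)
            / (2 * ((a : ℚ) + b))) ∧
    ((b : ℤ) ≤ x₀ → x₀ ≤ (a : ℤ) →
      ∑ y ∈ Finset.Icc (0 : ℤ) ((a : ℤ) + c - 1),
          P a b c x₀ y * ((y : ℚ) - ((a : ℚ) + c - 1) / 2)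
        = -(b : ℚ) * ((a : ℚ) + b + c) * ((a : ℚ) + b - 2 * (x₀ : ℚ))
            / (2 * ((a : ℚ) + b))) ∧
    ((a : ℤ) ≤ x₀ → x₀ ≤ (a : ℤ) + b - 1 →
      ∑ y ∈ Finset.Icc (0 : ℤ) ((a : ℤ) + c - 1),
          P a b c x₀ y * ((y : ℚ) - ((a : ℚ) + c - 1) / 2)
        = (-(b : ℚ) ^ 2 - a * b - b * c + a * c + a * (x₀ : ℚ) + b * (x₀ : ℚ))
            * ((a : ℚ) + b - (x₀ : ℚ)) / (2 * ((a : ℚ) + b))) :=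
  weighted_column_sum_b_le_a_general a b c hab x₀ hx0
end

section
/- Let a, n, c be positive integers and let (k₁, k₂, …, k_a) be a weakly decreasing sequence of positive integers with k₁ ≤ c. Then 2·S_n(k₁,…,k_a) = A_n(k₁,…,k_a) · (n·a·c + (a+n−1)·(k₁ + k₂ + ⋯ + k_a)); equivalently, S_n(k₁,…,k_a)/A_n(k₁,…,k_a) = (1/2)·(n·a·c + (a+n−1)·Σ_{i=1}^{a} k_i). -/
/-!
Read an array along its diagonals `j = i + n - e`, `0 ≤ e ≤ a + n`, padding rows too short to
meet a diagonal with `c`; let `D e` be the sum of diagonal `e` and `F e` the sum of `D e` over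
all arrays. For `1 ≤ d < a + n`, the piecewise-linear toggle replacing each entry `x` of
diagonal `d` by `min (left, up) + max (down, right) - x` is an involution of the set of arrays,
and since the `min`/`max` terms telescope along the diagonal it changes `D d` into
`D (d - 1) + D (d + 1) - D d`. Hence `F (d - 1) + F (d + 1) = 2 F d`, so `F` is an arithmetic
progression and `2 ∑ e, F e = (a + n + 1) (F 0 + F (a + n))`, where `F 0 = A ∑ k` and
`F (a + n) = A a c` for `A` the number of arrays. Removing the boundary entries and the padding
from `∑ e, F e` leaves `S_n`.
-/

open Finset

/-- `(n; k₁, …, k_a)`-arrays: assignments of integers to the cells `(i, j)` with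
`1 ≤ i ≤ a`, `1 ≤ j ≤ i + n` (the region `F_{a,n}`) such that the last entry of row `i`
is `k i`, all entries are at most `c`, and rows and columns are weakly decreasing within
`F_{a,n}`.  Cells are encoded 0-based (cell `(i, j)` corresponds to indices `(i-1, j-1)`),
entries take values in `{0, …, c}` (decreasingness forces all entries of a genuine array
to lie in this range), and entries outside `F_{a,n}` are normalised to `0`. -/
def Arrays (a n c : ℕ) (k : Fin a → ℕ) : Finset (Fin a → Fin (a + n) → Fin (c + 1)) :=
  univ.filter (fun T =>
    (∀ i : Fin a, (T i ⟨(i : ℕ) + n, Nat.add_lt_add_right i.isLt n⟩ : ℕ) = k i) ∧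
    (∀ i : Fin a, ∀ j j' : Fin (a + n),
        j ≤ j' → (j' : ℕ) ≤ (i : ℕ) + n → T i j' ≤ T i j) ∧
    (∀ i i' : Fin a, ∀ j : Fin (a + n),
        i ≤ i' → (j : ℕ) ≤ (i : ℕ) + n → T i' j ≤ T i j) ∧
    (∀ i : Fin a, ∀ j : Fin (a + n), (i : ℕ) + n < (j : ℕ) → T i j = 0))

section ArithmeticProgression

variable {M : Type*} [AddCommGroup M] {F : ℕ → M} {N : ℕ}

theorem eq_add_nsmul_of_add_eq_two_nsmul_s7
    (hF : ∀ d, d + 2 ≤ N → F (d + 2) + F d = 2 • F (d + 1)) :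
    ∀ e ≤ N, F e = F 0 + e • (F 1 - F 0)
  | 0, _ => by simp
  | 1, _ => by simp
  | e + 2, he => by
    have h₀ := eq_add_nsmul_of_add_eq_two_nsmul_s7 hF e (by omega)
    have h₁ := eq_add_nsmul_of_add_eq_two_nsmul_s7 hF (e + 1) (by omega)
    rw [eq_sub_of_add_eq (hF e he), h₀, h₁]
    module

theorem two_nsmul_sum_range_of_add_eq_two_nsmul
    (hF : ∀ d, d + 2 ≤ N → F (d + 2) + F d = 2 • F (d + 1)) :
    2 • ∑ e ∈ range (N + 1), F e = (N + 1) • (F 0 + F N) := by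
  have hpair : ∀ e ∈ range (N + 1), F e + F (N - e) = F 0 + F N := by
    intro e he
    have he : e ≤ N := Nat.lt_succ_iff.mp (mem_range.mp he)
    rw [eq_add_nsmul_of_add_eq_two_nsmul_s7 hF e he, eq_add_nsmul_of_add_eq_two_nsmul_s7 hF _ le_rfl,
      eq_add_nsmul_of_add_eq_two_nsmul_s7 hF _ (Nat.sub_le N e),
      ← Nat.add_sub_cancel' he, add_nsmul]
    simp only [Nat.add_sub_cancel_left]
    abel
  calc 2 • ∑ e ∈ range (N + 1), F e
      = ∑ e ∈ range (N + 1), F e + ∑ e ∈ range (N + 1), F (N - e) := by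
        rw [two_nsmul, ← sum_range_reflect F]; simp
    _ = (N + 1) • (F 0 + F N) := by rw [← sum_add_distrib, sum_congr rfl hpair]; simp

end ArithmeticProgression

theorem sum_range_min_add_max {M : Type*} [AddCancelCommMonoid M] [LinearOrder M]
    (α γ : ℕ → M) {A : ℕ} (h₀ : α 0 ≤ γ 0) (hA : α A ≤ γ A) :
    ∑ i ∈ range A, (min (α i) (γ i) + max (α (i + 1)) (γ (i + 1)))
      = ∑ i ∈ range A, (α i + γ (i + 1)) := by
  have telescope : ∀ m, ∑ i ∈ range m, (min (α i) (γ i) + max (α (i + 1)) (γ (i + 1)))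
      + min (α m) (γ m) = ∑ i ∈ range m, (α (i + 1) + γ (i + 1)) + min (α 0) (γ 0) := by
    intro m
    induction m with
    | zero => simp
    | succ m ih =>
      rw [sum_range_succ, sum_range_succ, add_right_comm _ _ (min (α 0) (γ 0)), ← ih,
        ← min_add_max (α (m + 1)) (γ (m + 1))]
      abel
  have h := telescope A
  rw [min_eq_left h₀, min_eq_left hA] at h
  have hα : ∑ i ∈ range A, α (i + 1) + α 0 = ∑ i ∈ range A, α i + α A :=
    (sum_range_succ' α A).symm.trans (sum_range_succ α A)
  refine add_right_cancel (b := α A) ?_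
  rw [h, sum_add_distrib, sum_add_distrib, add_right_comm, hα, add_right_comm]

theorem sum_range_sub_mul_two (m : ℕ) : (∑ i ∈ range m, (m - i)) * 2 = (m + 1) * m := by
  have hreflect : ∑ i ∈ range m, (m - i) = ∑ i ∈ range (m + 1), i := by
    rw [sum_range_succ', ← sum_range_reflect (· + 1)]
    exact sum_congr rfl fun i hi => by rw [mem_range] at hi; omega
  rw [hreflect, sum_range_id_mul_two, Nat.add_sub_cancel]

theorem exists_fin_intCast_eq {a : ℕ} {r : ℤ} (h₀ : 0 ≤ r) (h : r < a) :
    ∃ i : Fin a, ((i : ℕ) : ℤ) = r :=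
  ⟨⟨r.toNat, by omega⟩, by simp; omega⟩

namespace Arrays

variable {a n c : ℕ} {k : Fin a → ℕ} (T : Fin a → Fin (a + n) → Fin (c + 1))

/-- `T` on `ℤ × ℤ`: `c` above and to the left of the array, `0` below it, and each row
continued to the right by its last entry (padding by `0` there would break column monotonicity
at the staircase edge of `F_{a,n}`). -/
def paddedEntry (r j : ℤ) : ℕ :=
  if h : 0 ≤ r ∧ 0 ≤ j then
    if hr : r < a then
      (T ⟨r.toNat, by omega⟩ ⟨(min j (r + n)).toNat, by omega⟩ : ℕ)
    else 0
  else c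

def toggleValue (r j : ℤ) : ℕ :=
  min (paddedEntry T r (j - 1)) (paddedEntry T (r - 1) j)
    + max (paddedEntry T (r + 1) j) (paddedEntry T r (j + 1)) - paddedEntry T r j

/-- The `min c` only makes the value land in `Fin (c + 1)`; on arrays it is inactive
(`toggleValue_le`). -/
def toggle (d : ℕ) : Fin a → Fin (a + n) → Fin (c + 1) := fun i j =>
  if (j : ℕ) + d = i + n then ⟨min c (toggleValue T i j), by omega⟩ else T i j

/-- Diagonal `e` consists of the cells with `j + e = i + n`: diagonal `0` carries the `k i`,
and a row too short to meet diagonal `e` contributes `c`. -/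
def diagonalSum (e : ℕ) : ℕ :=
  ∑ i : Fin a, paddedEntry T i (i + n - e)

variable {T}

theorem paddedEntry_le (r j : ℤ) : paddedEntry T r j ≤ c := by
  unfold paddedEntry
  split_ifs
  exacts [Fin.is_le _, Nat.zero_le _, le_rfl]

theorem paddedEntry_of_row_neg {r : ℤ} (hr : r < 0) (j : ℤ) : paddedEntry T r j = c := by
  rw [paddedEntry, dif_neg (by omega)]

theorem paddedEntry_of_col_neg (r : ℤ) {j : ℤ} (hj : j < 0) : paddedEntry T r j = c := by
  rw [paddedEntry, dif_neg (by omega)]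

theorem paddedEntry_of_le_row {r j : ℤ} (hr : a ≤ r) (hj : 0 ≤ j) :
    paddedEntry T r j = 0 := by
  rw [paddedEntry, dif_pos ⟨by omega, hj⟩, dif_neg (not_lt.mpr hr)]

theorem paddedEntry_natCast (i : Fin a) (j : ℕ) :
    paddedEntry T i j = T i ⟨min j (i + n), by omega⟩ := by
  simp only [paddedEntry, Nat.cast_nonneg, and_self, Nat.cast_lt, i.isLt, dif_pos]
  congr
  all_goals omega

theorem paddedEntry_of_le (i : Fin a) (j : Fin (a + n)) (hj : (j : ℕ) ≤ i + n) :
    paddedEntry T i j = T i j := by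
  rw [paddedEntry_natCast]
  congr
  exact min_eq_left hj

theorem antitone_paddedEntry_of_row
    (hrow : ∀ (i : Fin a) (j j' : Fin (a + n)),
      j ≤ j' → (j' : ℕ) ≤ i + n → T i j' ≤ T i j)
    (r : ℤ) : Antitone (paddedEntry T r) := by
  refine antitone_int_of_succ_le fun j => ?_
  rcases lt_or_ge j 0 with hj | hj
  · rw [paddedEntry_of_col_neg r hj]; exact paddedEntry_le _ _
  rcases lt_or_ge r 0 with hr | hr
  · simp [paddedEntry_of_row_neg hr]
  rcases lt_or_ge r a with hra | hra
  · obtain ⟨i, rfl⟩ := exists_fin_intCast_eq hr hra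
    lift j to ℕ using hj
    rw [← Nat.cast_succ, paddedEntry_natCast, paddedEntry_natCast]
    exact hrow i _ _ (Fin.mk_le_mk.2 (by omega)) (by simp)
  · simp [paddedEntry_of_le_row hra (by omega : (0 : ℤ) ≤ j + 1)]

theorem antitone_paddedEntry_of_col
    (hrow : ∀ (i : Fin a) (j j' : Fin (a + n)),
      j ≤ j' → (j' : ℕ) ≤ i + n → T i j' ≤ T i j)
    (hcol : ∀ (i i' : Fin a) (j : Fin (a + n)),
      i ≤ i' → (j : ℕ) ≤ i + n → T i' j ≤ T i j)
    (j : ℤ) : Antitone (paddedEntry T · j) := by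
  refine antitone_int_of_succ_le fun r => ?_
  rcases lt_or_ge j 0 with hj | hj
  · simp [paddedEntry_of_col_neg _ hj]
  rcases lt_or_ge r 0 with hr | hr
  · rw [paddedEntry_of_row_neg hr]; exact paddedEntry_le _ _
  rcases lt_or_ge (r + 1) a with hra | hra
  · obtain ⟨i, rfl⟩ := exists_fin_intCast_eq hr (by omega : r < a)
    obtain ⟨i', hi'⟩ := exists_fin_intCast_eq (by omega) hra
    lift j to ℕ using hj
    rw [← hi', paddedEntry_natCast, paddedEntry_natCast]
    exact (hrow i' _ _ (Fin.mk_le_mk.2 (by omega)) (by simp)).trans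
      (hcol i i' _ (Fin.le_def.2 (by omega)) (by simp))
  · simp [paddedEntry_of_le_row hra hj]

theorem mem_arrays_iff :
    T ∈ Arrays a n c k ↔
      (∀ i : Fin a, (T i ⟨(i : ℕ) + n, by omega⟩ : ℕ) = k i) ∧
      (∀ r, Antitone (paddedEntry T r)) ∧
      (∀ j, Antitone (paddedEntry T · j)) ∧
      (∀ (i : Fin a) (j : Fin (a + n)), (i : ℕ) + n < j → T i j = 0) := by
  simp only [Arrays, mem_filter, mem_univ, true_and]
  refine and_congr_right fun _ =>
    and_assoc.symm.trans ((and_congr_left fun _ => ?_).trans and_assoc)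
  constructor
  · rintro ⟨hrow, hcol⟩
    exact ⟨antitone_paddedEntry_of_row hrow, antitone_paddedEntry_of_col hrow hcol⟩
  · rintro ⟨hrow, hcol⟩
    constructor
    · intro i j j' hjj' hj'
      have h : paddedEntry T i j' ≤ paddedEntry T i j := hrow i (Int.ofNat_le.2 hjj')
      rwa [paddedEntry_of_le i j' hj', paddedEntry_of_le i j (le_trans hjj' hj')] at h
    · intro i i' j hii' hj
      have h : paddedEntry T i' j ≤ paddedEntry T i j := hcol j (Int.ofNat_le.2 hii')
      rwa [paddedEntry_of_le i j hj, paddedEntry_of_le i' j (by omega)] at h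

theorem max_paddedEntry_succ_le (hT : T ∈ Arrays a n c k) (r j : ℤ) :
    max (paddedEntry T (r + 1) j) (paddedEntry T r (j + 1)) ≤ paddedEntry T r j :=
  max_le ((mem_arrays_iff.1 hT).2.2.1 j (by omega)) ((mem_arrays_iff.1 hT).2.1 r (by omega))

theorem paddedEntry_le_min_pred (hT : T ∈ Arrays a n c k) (r j : ℤ) :
    paddedEntry T r j ≤ min (paddedEntry T r (j - 1)) (paddedEntry T (r - 1) j) :=
  le_min ((mem_arrays_iff.1 hT).2.1 r (by omega)) ((mem_arrays_iff.1 hT).2.2.1 j (by omega))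

theorem toggleValue_le (hT : T ∈ Arrays a n c k) (r j : ℤ) :
    toggleValue T r j ≤ min (paddedEntry T r (j - 1)) (paddedEntry T (r - 1) j) := by
  have := max_paddedEntry_succ_le hT r j
  unfold toggleValue
  omega

theorem le_toggleValue (hT : T ∈ Arrays a n c k) (r j : ℤ) :
    max (paddedEntry T (r + 1) j) (paddedEntry T r (j + 1)) ≤ toggleValue T r j := by
  have := paddedEntry_le_min_pred hT r j
  unfold toggleValue
  omega

theorem paddedEntry_toggle (hT : T ∈ Arrays a n c k) {d : ℕ} (hd : 1 ≤ d) (r j : ℤ) :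
    paddedEntry (toggle T d) r j =
      if 0 ≤ r ∧ r < a ∧ 0 ≤ j ∧ j + d = r + n then toggleValue T r j
      else paddedEntry T r j := by
  rcases lt_or_ge j 0 with hj | hj
  · rw [if_neg (by omega), paddedEntry_of_col_neg _ hj, paddedEntry_of_col_neg _ hj]
  rcases lt_or_ge r 0 with hr | hr
  · rw [if_neg (by omega), paddedEntry_of_row_neg hr, paddedEntry_of_row_neg hr]
  rcases lt_or_ge r a with hra | hra
  · obtain ⟨i, rfl⟩ := exists_fin_intCast_eq hr hra
    lift j to ℕ using hj
    rw [paddedEntry_natCast, paddedEntry_natCast, toggle]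
    by_cases hdiag : j + d = i + n
    · rw [if_pos (by simp only; omega), if_pos (by omega)]
      simp only [min_eq_left (by omega : j ≤ i + n)]
      exact min_eq_right ((toggleValue_le hT _ _).trans ((min_le_left _ _).trans
        (paddedEntry_le _ _)))
    · rw [if_neg (by simp only; omega), if_neg (by omega)]
  · rw [if_neg (by omega), paddedEntry_of_le_row hra hj, paddedEntry_of_le_row hra hj]

theorem toggle_mem (hT : T ∈ Arrays a n c k) {d : ℕ} (hd : 1 ≤ d) :
    toggle T d ∈ Arrays a n c k := by
  obtain ⟨hk, hrow, hcol, hzero⟩ := mem_arrays_iff.1 hT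
  have hP := paddedEntry_toggle hT hd
  refine mem_arrays_iff.2 ⟨fun i => ?_, fun r => antitone_int_of_succ_le fun j => ?_,
    fun j => antitone_int_of_succ_le fun r => ?_, fun i j hij => ?_⟩
  · rw [toggle, if_neg (by simp only; omega)]
    exact hk i
  · rw [hP, hP]
    split_ifs
    · omega
    · simpa using (toggleValue_le hT r (j + 1)).trans (min_le_left _ _)
    · exact (le_max_right _ _).trans (le_toggleValue hT r j)
    · exact hrow r (by omega)
  · simp only [hP]
    split_ifs
    · omega
    · simpa using (toggleValue_le hT (r + 1) j).trans (min_le_right _ _)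
    · exact (le_max_left _ _).trans (le_toggleValue hT r j)
    · exact hcol j (by omega)
  · rw [toggle, if_neg (by omega)]
    exact hzero i j hij

theorem toggle_toggle (hT : T ∈ Arrays a n c k) {d : ℕ} (hd : 1 ≤ d) :
    toggle (toggle T d) d = T := by
  funext i j
  by_cases hdiag : (j : ℕ) + d = i + n
  · have hval : toggleValue (toggle T d) i j = paddedEntry T i j := by
      have hmax := max_paddedEntry_succ_le hT i j
      have hmin := paddedEntry_le_min_pred hT i j
      simp only [toggleValue, paddedEntry_toggle hT hd]
      split_ifs <;> omega
    rw [toggle, if_pos hdiag]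
    ext
    simp only [hval, paddedEntry_of_le _ _ (by omega : (j : ℕ) ≤ i + n),
      min_eq_right (Fin.is_le _)]
  · rw [toggle, if_neg hdiag, toggle, if_neg hdiag]

theorem paddedEntry_toggle_add (hT : T ∈ Arrays a n c k) {d : ℕ} (hd : 1 ≤ d)
    {r j : ℤ} (hr : 0 ≤ r) (hra : r < a) (hj : j + d = r + n) :
    paddedEntry (toggle T d) r j + paddedEntry T r j
      = min (paddedEntry T r (j - 1)) (paddedEntry T (r - 1) j)
        + max (paddedEntry T (r + 1) j) (paddedEntry T r (j + 1)) := by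
  rw [paddedEntry_toggle hT hd]
  split_ifs
  · have := paddedEntry_le_min_pred hT r j
    unfold toggleValue
    omega
  · have hj : j < 0 := by omega
    rw [paddedEntry_of_col_neg _ hj, paddedEntry_of_col_neg _ (by omega : j - 1 < 0),
      paddedEntry_of_col_neg _ hj, paddedEntry_of_col_neg _ hj, min_self,
      max_eq_left (paddedEntry_le _ _)]

theorem diagonalSum_eq_sum_range (e : ℕ) :
    diagonalSum T e = ∑ r ∈ range a, paddedEntry T r (r + n - e) :=
  Fin.sum_univ_eq_sum_range (fun r : ℕ => paddedEntry T r (r + n - e)) a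

theorem diagonalSum_toggle_add (hT : T ∈ Arrays a n c k) {d : ℕ}
    (hd : d + 2 ≤ a + n) :
    diagonalSum (toggle T (d + 1)) (d + 1) + diagonalSum T (d + 1)
      = diagonalSum T (d + 2) + diagonalSum T d := by
  -- `α r` and `γ r` are the left and upper neighbours of the cell of row `r` on diagonal
  -- `d + 1`; its lower and right neighbours are `α (r + 1)` and `γ (r + 1)`.
  set α : ℕ → ℕ := fun r => paddedEntry T r (r + n - (d + 2)) with hα
  set γ : ℕ → ℕ := fun r => paddedEntry T ((r : ℤ) - 1) (r + n - (d + 1)) with hγ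
  have hrow : ∀ r ∈ range a,
      paddedEntry (toggle T (d + 1)) r (r + n - (d + 1 : ℕ))
          + paddedEntry T r (r + n - (d + 1 : ℕ))
        = min (α r) (γ r) + max (α (r + 1)) (γ (r + 1)) := by
    intro r hr
    rw [paddedEntry_toggle_add hT (by omega) (by omega) (by simpa using hr) (by push_cast; ring)]
    simp only [hα, hγ]
    push_cast
    ring_nf
  have h₀ : α 0 ≤ γ 0 :=
    (paddedEntry_le _ _).trans (paddedEntry_of_row_neg (by norm_num) _).ge
  have hA : α a ≤ γ a := (paddedEntry_of_le_row le_rfl (by omega)).trans_le (Nat.zero_le _)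
  rw [diagonalSum_eq_sum_range, diagonalSum_eq_sum_range, diagonalSum_eq_sum_range,
    diagonalSum_eq_sum_range, ← sum_add_distrib, sum_congr rfl hrow,
    sum_range_min_add_max α γ h₀ hA, sum_add_distrib]
  congr 1
  refine sum_congr rfl fun r _ => ?_
  simp only [hγ]
  congr 1 <;> push_cast <;> ring

theorem sum_diagonalSum_add_two {d : ℕ} (hd : d + 2 ≤ a + n) :
    ∑ T ∈ Arrays a n c k, diagonalSum T (d + 2) + ∑ T ∈ Arrays a n c k, diagonalSum T d
      = 2 * ∑ T ∈ Arrays a n c k, diagonalSum T (d + 1) := by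
  have hinv : ∑ T ∈ Arrays a n c k, diagonalSum (toggle T (d + 1)) (d + 1)
      = ∑ T ∈ Arrays a n c k, diagonalSum T (d + 1) :=
    sum_nbij' (toggle · (d + 1)) (toggle · (d + 1))
      (fun _ hT => toggle_mem hT (by omega)) (fun _ hT => toggle_mem hT (by omega))
      (fun _ hT => toggle_toggle hT (by omega)) (fun _ hT => toggle_toggle hT (by omega))
      (fun _ _ => rfl)
  rw [← sum_add_distrib, ← sum_congr rfl fun T hT => diagonalSum_toggle_add hT hd,
    sum_add_distrib, hinv, two_mul]

theorem diagonalSum_zero (hT : T ∈ Arrays a n c k) :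
    diagonalSum T 0 = ∑ i, k i := by
  refine sum_congr rfl fun i _ => ?_
  rw [Nat.cast_zero, sub_zero, ← Nat.cast_add, paddedEntry_natCast]
  simp only [min_self]
  exact (mem_arrays_iff.1 hT).1 i

variable (T) in
theorem diagonalSum_of_le {e : ℕ} (he : a + n ≤ e) : diagonalSum T e = a * c := by
  rw [diagonalSum, sum_congr rfl fun i _ => paddedEntry_of_col_neg _ (by omega), sum_const,
    card_univ, Fintype.card_fin, smul_eq_mul]

theorem sum_range_paddedEntry_row (hT : T ∈ Arrays a n c k) (i : Fin a) :
    ∑ e ∈ range (a + n + 1), paddedEntry T i (i + n - e)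
      = ∑ j ∈ univ.filter (fun j : Fin (a + n) => (j : ℕ) < i + n), (T i j : ℕ)
          + k i + (a - i) * c := by
  have hsplit : a + n + 1 = (i + n + 1) + (a - i) := by omega
  have hrow : ∑ e ∈ range (i + n + 1), paddedEntry T i (i + n - e)
      = ∑ j ∈ range (i + n + 1), paddedEntry T i j := by
    rw [← sum_range_reflect]
    refine sum_congr rfl fun e he => ?_
    rw [mem_range] at he
    congr 1
    omega
  have hpad :
      ∑ x ∈ range (a - i), paddedEntry T i (i + n - (i + n + 1 + x : ℕ)) = (a - i) * c := by
    have hneg : ∀ x : ℕ, paddedEntry T i (i + n - (i + n + 1 + x : ℕ)) = c :=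
      fun x => paddedEntry_of_col_neg _ (by omega)
    simp only [hneg, sum_const, card_range, smul_eq_mul]
  have hinterior : ∑ j ∈ univ.filter (fun j : Fin (a + n) => (j : ℕ) < i + n), (T i j : ℕ)
      = ∑ j ∈ range (i + n), paddedEntry T i j :=
    sum_nbij (fun j => (j : ℕ)) (fun j hj => by simpa using hj) Fin.val_injective.injOn
      (fun j hj => ⟨⟨j, by simp at hj; omega⟩, by simpa using hj, rfl⟩)
      (fun j hj => (paddedEntry_of_le _ _ (by simp at hj; omega)).symm)
  have hlast : paddedEntry T i ((i + n : ℕ) : ℤ) = k i := by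
    rw [paddedEntry_natCast]
    simp only [min_self]
    exact (mem_arrays_iff.1 hT).1 i
  rw [hsplit, sum_range_add, hrow, hpad, sum_range_succ, hinterior, hlast]

theorem sum_range_diagonalSum (hT : T ∈ Arrays a n c k) :
    ∑ e ∈ range (a + n + 1), diagonalSum T e
      = ∑ p ∈ univ.filter (fun p : Fin a × Fin (a + n) => (p.2 : ℕ) < p.1 + n),
            (T p.1 p.2 : ℕ)
        + ∑ i, k i + (∑ i : Fin a, (a - i)) * c := by
  simp only [diagonalSum]
  rw [sum_comm, sum_congr rfl fun i _ => sum_range_paddedEntry_row hT i, sum_add_distrib,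
    sum_add_distrib, ← sum_mul, sum_filter, Fintype.sum_prod_type]
  simp only [← sum_filter]

end Arrays

theorem array_entry_sum_general (a n c : ℕ) (k : Fin a → ℕ) :
    2 * (∑ T ∈ Arrays a n c k,
          ∑ p ∈ univ.filter (fun p : Fin a × Fin (a + n) => (p.2 : ℕ) < (p.1 : ℕ) + n),
            (T p.1 p.2 : ℕ))
      = (Arrays a n c k).card * (n * a * c + (a + n - 1) * ∑ i, k i) := by
  rcases Nat.eq_zero_or_pos a with rfl | ha
  · simp
  have hprogression :
      2 * ∑ e ∈ range (a + n + 1), ∑ T ∈ Arrays a n c k, Arrays.diagonalSum T e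
          = (a + n + 1) * (∑ T ∈ Arrays a n c k, Arrays.diagonalSum T 0
          + ∑ T ∈ Arrays a n c k, Arrays.diagonalSum T (a + n)) := by
    have h := two_nsmul_sum_range_of_add_eq_two_nsmul (N := a + n)
      (F := fun e => ((∑ T ∈ Arrays a n c k, Arrays.diagonalSum T e : ℕ) : ℤ))
      fun d hd => by simp only [nsmul_eq_mul]; exact_mod_cast Arrays.sum_diagonalSum_add_two hd
    simp only [nsmul_eq_mul] at h
    exact_mod_cast h
  rw [sum_comm, sum_congr rfl fun T hT => Arrays.sum_range_diagonalSum hT,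
    sum_congr rfl fun T hT => Arrays.diagonalSum_zero hT,
    sum_congr rfl fun T _ => Arrays.diagonalSum_of_le T le_rfl] at hprogression
  simp only [sum_add_distrib, sum_const, smul_eq_mul] at hprogression
  have hgauss := Fin.sum_univ_eq_sum_range (fun i => a - i) a ▸ sum_range_sub_mul_two a
  generalize ∑ i : Fin a, (a - (i : ℕ)) = G at hprogression hgauss
  zify [show 1 ≤ a + n by omega] at hprogression hgauss ⊢
  linear_combination hprogression - ((Arrays a n c k).card * c : ℤ) * hgauss

theorem array_entry_sum (a n c : ℕ) (ha : 0 < a) (hn : 0 < n) (hc : 0 < c)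
    (k : Fin a → ℕ) (hdec : ∀ i j : Fin a, i ≤ j → k j ≤ k i)
    (hpos : ∀ i, 1 ≤ k i) (hle : ∀ i, k i ≤ c) :
    2 * (∑ T ∈ Arrays a n c k,
          ∑ p ∈ univ.filter (fun p : Fin a × Fin (a + n) => (p.2 : ℕ) < (p.1 : ℕ) + n),
            (T p.1 p.2 : ℕ))
      = (Arrays a n c k).card * (n * a * c + (a + n - 1) * ∑ i, k i) :=
  array_entry_sum_general a n c k
end
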